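/- arXiv:1109.0612 — 4 statements merged into one kernel-verified Lean document; each statement's English description precedes it below -/
import Mathlib

section
/- Let K be a field, S = K[x₁,…,xₙ], R = S[x₀], and let G be a Gröbner basis of an ideal I ⊆ R with respect to a monomial ordering eliminating x₀ (i.e., any monomial involving x₀ is larger than any monomial in S). Then for each k ∈ ℕ, the set { LC_{x₀}(g) | g ∈ G, deg_{x₀}(g) ≤ k } is a Gröbner basis of the k-th partial elimination ideal K_k(I) = { f₀ ∈ S | ∃ g̃ ∈ R, deg_{x₀}(g̃) < k, x₀^k f₀ + g̃ ∈ I } with respect to the induced ordering on S. -/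
open MvPolynomial

variable {K : Type*} [Field K] {n : ℕ}

/-- The `m`-leading monomial of a multivariate polynomial (the monomial `0` if `p = 0`). -/
noncomputable def leadMon (m : MonomialOrder (Fin n)) (p : MvPolynomial (Fin n) K) :
    Fin n →₀ ℕ :=
  m.toSyn.symm (p.support.sup m.toSyn)

/-- `G` is a Gröbner basis of the set (ideal) `J ⊆ S = K[x₁,…,xₙ]` with respect to the
monomial order `m`: `G ⊆ J` and the leading monomial of every nonzero element of `J` is
divisible by the leading monomial of some nonzero element of `G`. -/
def IsGroebnerS (m : MonomialOrder (Fin n)) (J : Set (MvPolynomial (Fin n) K))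
    (G : Set (MvPolynomial (Fin n) K)) : Prop :=
  G ⊆ J ∧ ∀ p ∈ J, p ≠ 0 → ∃ g ∈ G, g ≠ 0 ∧ leadMon m g ≤ leadMon m p

/-- `G` is a Gröbner basis of the ideal `I ⊆ R = S[x₀]` with respect to the elimination
ordering for `x₀` induced by the monomial order `m` on `S = K[x₁,…,xₙ]` (monomials of `R`
are compared first by their `x₀`-degree and then by `m`): `G ⊆ I` and the leading monomial
of every nonzero element of `I` is divisible by the leading monomial of some nonzero
element of `G`. -/
def IsGroebnerElim (m : MonomialOrder (Fin n))
    (I : Ideal (Polynomial (MvPolynomial (Fin n) K)))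
    (G : Set (Polynomial (MvPolynomial (Fin n) K))) : Prop :=
  (∀ g ∈ G, g ∈ I) ∧ ∀ f ∈ I, f ≠ 0 → ∃ g ∈ G, g ≠ 0 ∧
    g.natDegree ≤ f.natDegree ∧ leadMon m g.leadingCoeff ≤ leadMon m f.leadingCoeff

/-- The `k`-th partial elimination ideal of an ideal `I ⊆ S[x₀]`, as a subset of `S`. -/
def pelim (I : Ideal (Polynomial (MvPolynomial (Fin n) K))) (k : ℕ) :
    Set (MvPolynomial (Fin n) K) :=
  {f₀ | ∃ g : Polynomial (MvPolynomial (Fin n) K),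
    g.degree < (k : ℕ) ∧ Polynomial.X ^ k * Polynomial.C f₀ + g ∈ I}

/-- If `G` is a Gröbner basis of `I ⊆ R = S[x₀]` with respect to an elimination ordering
for `x₀`, then for each `k` the leading coefficients (in `x₀`) of the elements of `G` of
`x₀`-degree at most `k` form a Gröbner basis of the `k`-th partial elimination ideal
`K_k(I)` with respect to the induced ordering on `S`. -/
theorem leadingCoeffs_groebner_of_pelim (m : MonomialOrder (Fin n))
    (I : Ideal (Polynomial (MvPolynomial (Fin n) K)))
    (G : Set (Polynomial (MvPolynomial (Fin n) K)))
    (hG : IsGroebnerElim m I G) (k : ℕ) :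
    IsGroebnerS m (pelim I k)
      (Polynomial.leadingCoeff '' {g ∈ G | g.natDegree ≤ k}) := by
  constructor
  · rintro _ ⟨g, ⟨hgG, hgk⟩, rfl⟩
    by_cases hg0 : g = 0
    · exact ⟨0, by simp [bot_lt_iff_ne_bot, Nat.cast_withBot], by simpa [hg0] using I.zero_mem⟩
    · set d := g.natDegree with hd
      refine ⟨Polynomial.X ^ (k - d) * g.eraseLead, ?_, ?_⟩
      · calc (Polynomial.X ^ (k - d) * g.eraseLead).degree
            ≤ ((k - d : ℕ) : WithBot ℕ) + g.eraseLead.degree := by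
              simpa using Polynomial.degree_mul_le _ _
          _ < ((k - d : ℕ) : WithBot ℕ) + g.degree := by
              exact WithBot.add_lt_add_left (by simp) (Polynomial.degree_eraseLead_lt hg0)
          _ = ((k : ℕ) : WithBot ℕ) := by
              rw [Polynomial.degree_eq_natDegree hg0, ← hd, ← Nat.cast_add,
                Nat.sub_add_cancel hgk]
      · have key : Polynomial.X ^ k * Polynomial.C g.leadingCoeff
            + Polynomial.X ^ (k - d) * g.eraseLead = Polynomial.X ^ (k - d) * g := by
          have hx : (Polynomial.X : Polynomial (MvPolynomial (Fin n) K)) ^ (k - d)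
              * Polynomial.X ^ d = Polynomial.X ^ k := by
            rw [← pow_add, Nat.sub_add_cancel hgk]
          conv_rhs => rw [← Polynomial.eraseLead_add_C_mul_X_pow g]
          rw [← hd, mul_add, ← hx]
          ring
        rw [key]
        exact I.mul_mem_left _ (hG.1 g hgG)
  · rintro p ⟨q, hq, hqI⟩ hp0
    set f := Polynomial.X ^ k * Polynomial.C p + q with hf
    have hck : f.coeff k = p := by
      have h1 : (Polynomial.X ^ k * Polynomial.C p : Polynomial (MvPolynomial (Fin n) K)).coeff k = p := by
        simpa using Polynomial.coeff_X_pow_mul (Polynomial.C p) k 0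
      have h2 : q.coeff k = 0 := Polynomial.coeff_eq_zero_of_degree_lt hq
      simp [hf, h1, h2]
    have hdegle : f.degree ≤ (k : ℕ) := by
      refine (Polynomial.degree_add_le _ _).trans (max_le ?_ (le_of_lt hq))
      calc (Polynomial.X ^ k * Polynomial.C p : Polynomial (MvPolynomial (Fin n) K)).degree
          ≤ (Polynomial.X ^ k : Polynomial (MvPolynomial (Fin n) K)).degree
            + (Polynomial.C p).degree := Polynomial.degree_mul_le _ _
        _ ≤ ((k : ℕ) : WithBot ℕ) + 0 := by
            gcongr
            · exact Polynomial.degree_X_pow_le k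
            · exact Polynomial.degree_C_le
        _ = ((k : ℕ) : WithBot ℕ) := add_zero _
    have hf0 : f ≠ 0 := fun h => hp0 (by simpa [h] using hck.symm)
    have hnd : f.natDegree = k :=
      le_antisymm (Polynomial.natDegree_le_iff_degree_le.2 hdegle)
        (Polynomial.le_natDegree_of_ne_zero (hck ▸ hp0))
    have hlc : f.leadingCoeff = p := by
      rw [Polynomial.leadingCoeff, hnd, hck]
    obtain ⟨g, hgG, hg0, hgd, hgm⟩ := hG.2 f hqI hf0
    exact ⟨g.leadingCoeff, ⟨g, ⟨hgG, hgd.trans hnd.le⟩, rfl⟩,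
      Polynomial.leadingCoeff_ne_zero.2 hg0, by rwa [hlc] at hgm⟩
end

section
/- Special case of the elimination theorem: if G is a Gröbner basis of I ⊆ K[x₀,…,xₙ] with respect to an elimination ordering for x₀, then G ∩ K[x₁,…,xₙ] is a Gröbner basis of I ∩ K[x₁,…,xₙ]. -/
open MvPolynomial

variable {K : Type*} [Field K] {n : ℕ}

/-- Elimination theorem: if `G` is a Gröbner basis of `I ⊆ K[x₀,…,xₙ]` with respect to an
elimination ordering for `x₀`, then `G ∩ K[x₁,…,xₙ]` is a Gröbner basis of
`I ∩ K[x₁,…,xₙ]`. -/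
theorem elimination_theorem (m : MonomialOrder (Fin n))
    (I : Ideal (Polynomial (MvPolynomial (Fin n) K)))
    (G : Set (Polynomial (MvPolynomial (Fin n) K)))
    (hG : IsGroebnerElim m I G) :
    IsGroebnerS m
      ((I.comap (Polynomial.C : MvPolynomial (Fin n) K →+* Polynomial (MvPolynomial (Fin n) K)) :
        Ideal (MvPolynomial (Fin n) K)) : Set (MvPolynomial (Fin n) K))
      {s : MvPolynomial (Fin n) K | Polynomial.C s ∈ G} := by
  constructor
  · intro s hs
    exact hG.1 _ hs
  · intro p hp hp0
    have hCp : Polynomial.C p ∈ I := hp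
    have hCp0 : Polynomial.C p ≠ 0 := by simpa using hp0
    obtain ⟨g, hgG, hg0, hdeg, hlm⟩ := hG.2 _ hCp hCp0
    have hgdeg : g.natDegree = 0 := by
      simpa [Polynomial.natDegree_C] using hdeg
    have hgC : g = Polynomial.C (g.coeff 0) := (Polynomial.eq_C_of_natDegree_eq_zero hgdeg)
    refine ⟨g.coeff 0, ?_, ?_, ?_⟩
    · show Polynomial.C (g.coeff 0) ∈ G
      rwa [← hgC]
    · intro h
      exact hg0 (by rw [hgC, h, map_zero])
    · have h1 : g.leadingCoeff = g.coeff 0 := by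
        rw [Polynomial.leadingCoeff, hgdeg]
      have h2 : (Polynomial.C p).leadingCoeff = p := Polynomial.leadingCoeff_C p
      rwa [h1, h2] at hlm
end

section
/- Partial elimination ideals commute with linear changes of coordinates fixing the filtration: if ψ : R → R is a graded K-algebra automorphism of R = K[x₀,…,xₙ] with ψ(x₀) = x₀ + ℓ for some linear form ℓ ∈ K[x₁,…,xₙ] and ψ(S) = S where S = K[x₁,…,xₙ], then for all k, K_k(ψ(I)) = ψ|_S (K_k(I)) for every ideal I ⊆ R. -/
open MvPolynomial

set_option maxHeartbeats 1000000

/-- The `k`-th partial elimination ideal with respect to `x₀` of an ideal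
`I ⊆ R = K[x₀,…,xₙ]`, as a subset of `S = K[x₁,…,xₙ]` (embedded in `R` via
`rename Fin.succ`); the condition `deg_{x₀}(g) < k` is expressed by requiring that every
monomial of `g` has `x₀`-exponent `< k`. -/
def pelimMv {K : Type*} [Field K] {n : ℕ} (I : Ideal (MvPolynomial (Fin (n + 1)) K))
    (k : ℕ) : Set (MvPolynomial (Fin n) K) :=
  {f₀ | ∃ g : MvPolynomial (Fin (n + 1)) K, (∀ d ∈ g.support, d 0 < k) ∧
    X 0 ^ k * rename Fin.succ f₀ + g ∈ I}

section Aux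

variable {K : Type*} [Field K] {n : ℕ}

/-- `finSuccEquiv` sends `rename Fin.succ p` to the constant polynomial `C p`. -/
lemma fse_rename (p : MvPolynomial (Fin n) K) :
    finSuccEquiv K n (rename Fin.succ p) = Polynomial.C p := by
  induction p using MvPolynomial.induction_on with
  | C a => simp [finSuccEquiv_apply]
  | add p q hp hq => simp [map_add, hp, hq]
  | mul_X p i hp => rw [map_mul, map_mul, hp, rename_X, finSuccEquiv_X_succ, map_mul]

/-- The support condition in `pelimMv` is degree in `x₀` being `< k`. -/
lemma support_lt_iff (g : MvPolynomial (Fin (n + 1)) K) (k : ℕ) :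
    (∀ d ∈ g.support, d 0 < k) ↔ (finSuccEquiv K n g).degree < (k : WithBot ℕ) := by
  rw [Polynomial.degree_lt_iff_coeff_zero]
  constructor
  · intro h m hm
    by_contra hc
    have hmem : m ∈ (finSuccEquiv K n g).support := Polynomial.mem_support_iff.mpr hc
    rw [support_finSuccEquiv] at hmem
    obtain ⟨d, hd, rfl⟩ := Finset.mem_image.mp hmem
    exact absurd (h d hd) (not_lt.mpr hm)
  · intro h d hd
    by_contra hc
    push_neg at hc
    have : (d 0) ∈ (finSuccEquiv K n g).support := by
      rw [support_finSuccEquiv]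
      exact Finset.mem_image.mpr ⟨d, hd, rfl⟩
    exact Polynomial.mem_support_iff.mp this (h _ hc)

lemma deg_bound0 (ℓ : MvPolynomial (Fin n) K) (k : ℕ) :
    ((Polynomial.X + Polynomial.C ℓ) ^ k - Polynomial.X ^ k :
      Polynomial (MvPolynomial (Fin n) K)).degree < (k : WithBot ℕ) := by
  rw [add_pow, Finset.sum_range_succ]
  simp only [Nat.sub_self, pow_zero, Nat.choose_self, Nat.cast_one, mul_one]
  rw [add_sub_cancel_right]
  refine lt_of_le_of_lt (Polynomial.degree_sum_le _ _) ?_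
  refine (Finset.sup_lt_iff (WithBot.bot_lt_coe k)).mpr ?_
  intro i hi
  have hA : (Polynomial.X ^ i : Polynomial (MvPolynomial (Fin n) K)).degree ≤ (i : WithBot ℕ) :=
    le_of_eq (Polynomial.degree_X_pow i)
  have hB : ((Polynomial.C ℓ) ^ (k - i) : Polynomial (MvPolynomial (Fin n) K)).degree ≤ 0 := by
    refine le_trans (Polynomial.degree_pow_le_of_le _ Polynomial.degree_C_le) ?_
    simp
  have hC : ((k.choose i : Polynomial (MvPolynomial (Fin n) K))).degree ≤ 0 :=
    Polynomial.degree_natCast_le _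
  have : (Polynomial.X ^ i * Polynomial.C ℓ ^ (k - i) *
      (k.choose i : Polynomial (MvPolynomial (Fin n) K))).degree ≤ (i : WithBot ℕ) := by
    calc (Polynomial.X ^ i * Polynomial.C ℓ ^ (k - i) *
          (k.choose i : Polynomial (MvPolynomial (Fin n) K))).degree
        ≤ (Polynomial.X ^ i * Polynomial.C ℓ ^ (k - i)).degree +
          ((k.choose i : Polynomial (MvPolynomial (Fin n) K))).degree :=
          Polynomial.degree_mul_le _ _
      _ ≤ ((Polynomial.X ^ i : Polynomial (MvPolynomial (Fin n) K)).degree +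
          ((Polynomial.C ℓ) ^ (k - i)).degree) + 0 :=
          add_le_add (Polynomial.degree_mul_le _ _) hC
      _ ≤ ((i : WithBot ℕ) + 0) + 0 := add_le_add (add_le_add hA hB) le_rfl
      _ = (i : WithBot ℕ) := by simp
  refine lt_of_le_of_lt this ?_
  exact WithBot.coe_lt_coe.mpr (Finset.mem_range.mp hi)

lemma deg_psi (ψ : MvPolynomial (Fin (n + 1)) K ≃ₐ[K] MvPolynomial (Fin (n + 1)) K)
    (ℓ : MvPolynomial (Fin n) K)
    (hx0 : ψ (X 0) = X 0 + rename Fin.succ ℓ)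
    (hS : ∀ s : MvPolynomial (Fin n) K, ∃ s' : MvPolynomial (Fin n) K,
      ψ (rename Fin.succ s) = rename Fin.succ s')
    (q : Polynomial (MvPolynomial (Fin n) K)) :
    (finSuccEquiv K n (ψ ((finSuccEquiv K n).symm q))).degree ≤ q.degree := by
  set F : Polynomial (MvPolynomial (Fin n) K) →+* Polynomial (MvPolynomial (Fin n) K) :=
    ((finSuccEquiv K n : MvPolynomial (Fin (n + 1)) K →+* _)).comp
      (((ψ : MvPolynomial (Fin (n + 1)) K →+* _)).comp
        (((finSuccEquiv K n).symm : Polynomial (MvPolynomial (Fin n) K) →+* _))) with hF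
  have hFapp : ∀ x, F x = finSuccEquiv K n (ψ ((finSuccEquiv K n).symm x)) := fun x => rfl
  rw [← hFapp]
  have hFC : ∀ a : MvPolynomial (Fin n) K, (F (Polynomial.C a)).degree ≤ 0 := by
    intro a
    obtain ⟨a', ha'⟩ := hS a
    have h1 : (finSuccEquiv K n).symm (Polynomial.C a) = rename Fin.succ a := by
      rw [← fse_rename a, AlgEquiv.symm_apply_apply]
    rw [hFapp, h1, ha', fse_rename]
    exact Polynomial.degree_C_le
  have hFX : (F Polynomial.X).degree ≤ 1 := by
    have h1 : (finSuccEquiv K n).symm (Polynomial.X) = X 0 := by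
      rw [← finSuccEquiv_X_zero (R := K) (n := n), AlgEquiv.symm_apply_apply]
    rw [hFapp, h1, hx0, map_add, finSuccEquiv_X_zero, fse_rename]
    refine le_trans (Polynomial.degree_add_le _ _) (max_le ?_ ?_)
    · exact le_of_eq Polynomial.degree_X
    · exact le_trans Polynomial.degree_C_le (by norm_num)
  conv_lhs => rw [q.as_sum_support, map_sum]
  refine le_trans (Polynomial.degree_sum_le _ _) ?_
  rw [Finset.sup_le_iff]
  intro j hj
  have hmono : F ((Polynomial.monomial j) (q.coeff j)) =
      F (Polynomial.C (q.coeff j)) * (F Polynomial.X) ^ j := by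
    rw [← Polynomial.C_mul_X_pow_eq_monomial, map_mul, map_pow]
  rw [hmono]
  calc (F (Polynomial.C (q.coeff j)) * (F Polynomial.X) ^ j).degree
      ≤ (F (Polynomial.C (q.coeff j))).degree + ((F Polynomial.X) ^ j).degree :=
        Polynomial.degree_mul_le _ _
    _ ≤ 0 + (j : WithBot ℕ) * 1 :=
        add_le_add (hFC _) (Polynomial.degree_pow_le_of_le _ hFX)
    _ = (j : WithBot ℕ) := by simp
    _ ≤ q.degree := Polynomial.le_degree_of_ne_zero (Polynomial.mem_support_iff.mp hj)

/-- Main one-directional lemma: needs no homogeneity hypotheses. -/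
lemma lemA (ψ : MvPolynomial (Fin (n + 1)) K ≃ₐ[K] MvPolynomial (Fin (n + 1)) K)
    (ℓ : MvPolynomial (Fin n) K)
    (hx0 : ψ (X 0) = X 0 + rename Fin.succ ℓ)
    (hS : ∀ s : MvPolynomial (Fin n) K, ∃ s' : MvPolynomial (Fin n) K,
      ψ (rename Fin.succ s) = rename Fin.succ s')
    (I : Ideal (MvPolynomial (Fin (n + 1)) K)) (k : ℕ) {s t : MvPolynomial (Fin n) K}
    (hst : ψ (rename Fin.succ s) = rename Fin.succ t)
    (hs : s ∈ pelimMv I k) :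
    t ∈ pelimMv (I.map (ψ : MvPolynomial (Fin (n + 1)) K →+* MvPolynomial (Fin (n + 1)) K)) k := by
  obtain ⟨g, hg, hmem⟩ := hs
  refine ⟨ψ (X 0 ^ k * rename Fin.succ s + g) - X 0 ^ k * rename Fin.succ t, ?_, ?_⟩
  · have hrw : ψ (X 0 ^ k * rename Fin.succ s + g) - X 0 ^ k * rename Fin.succ t
        = ((X 0 + rename Fin.succ ℓ) ^ k - X 0 ^ k) * rename Fin.succ t + ψ g := by
      rw [map_add, map_mul, map_pow, hx0, hst]; ring
    rw [hrw, support_lt_iff, map_add]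
    refine lt_of_le_of_lt (Polynomial.degree_add_le _ _) (max_lt ?_ ?_)
    · have heq : finSuccEquiv K n (((X 0 + rename Fin.succ ℓ) ^ k - X 0 ^ k) * rename Fin.succ t)
          = ((Polynomial.X + Polynomial.C ℓ) ^ k - Polynomial.X ^ k) * Polynomial.C t := by
        rw [map_mul, map_sub, map_pow, map_pow, map_add, finSuccEquiv_X_zero, fse_rename,
          fse_rename]
      rw [heq]
      calc (((Polynomial.X + Polynomial.C ℓ) ^ k - Polynomial.X ^ k) * Polynomial.C t).degree
          ≤ ((Polynomial.X + Polynomial.C ℓ) ^ k - Polynomial.X ^ k).degree +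
            (Polynomial.C t : Polynomial (MvPolynomial (Fin n) K)).degree :=
            Polynomial.degree_mul_le _ _
        _ ≤ ((Polynomial.X + Polynomial.C ℓ) ^ k - Polynomial.X ^ k).degree + 0 :=
            add_le_add le_rfl Polynomial.degree_C_le
        _ = ((Polynomial.X + Polynomial.C ℓ) ^ k - Polynomial.X ^ k).degree := by simp
        _ < (k : WithBot ℕ) := deg_bound0 ℓ k
    · have h1 : (finSuccEquiv K n g).degree < (k : WithBot ℕ) := (support_lt_iff g k).mp hg
      have h2 := deg_psi ψ ℓ hx0 hS (finSuccEquiv K n g)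
      rw [(finSuccEquiv K n).symm_apply_apply] at h2
      exact lt_of_le_of_lt h2 h1
  · have hrw : X 0 ^ k * rename Fin.succ t +
        (ψ (X 0 ^ k * rename Fin.succ s + g) - X 0 ^ k * rename Fin.succ t)
        = ψ (X 0 ^ k * rename Fin.succ s + g) := by ring
    rw [hrw]
    exact Ideal.mem_map_of_mem _ hmem

lemma exists_single_of_degree_one (d : Fin n →₀ ℕ) (h : Finsupp.degree d = 1) :
    ∃ i, d = Finsupp.single i 1 := by
  have hne : d ≠ 0 := by
    intro h0; rw [h0] at h; simp at h
  obtain ⟨i, hi⟩ := Finsupp.support_nonempty_iff.mpr hne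
  have hdi : d i = 1 := le_antisymm (h ▸ Finsupp.le_degree i d)
    (Nat.one_le_iff_ne_zero.mpr (Finsupp.mem_support_iff.mp hi))
  refine ⟨i, ?_⟩
  have hsum : d i + ∑ j ∈ d.support.erase i, d j = 1 := by
    rw [Finset.add_sum_erase _ _ hi]; exact h
  have hzero : ∀ j ∈ d.support.erase i, d j = 0 := by
    rw [hdi] at hsum
    have : ∑ j ∈ d.support.erase i, d j = 0 := by omega
    exact fun j hj => Finset.sum_eq_zero_iff.mp this j hj
  ext j
  rcases eq_or_ne j i with rfl | hji
  · simp [hdi]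
  · rw [Finsupp.single_apply, if_neg (fun hh => hji hh.symm)]
    by_cases hjs : j ∈ d.support
    · exact hzero j (Finset.mem_erase.mpr ⟨hji, hjs⟩)
    · exact Finsupp.notMem_support_iff.mp hjs

lemma homog1_mem (s : MvPolynomial (Fin n) K) (h : s.IsHomogeneous 1) :
    rename Fin.succ s ∈ Submodule.span K
      (Set.range fun i : Fin n => (X i.succ : MvPolynomial (Fin (n + 1)) K)) := by
  rw [← s.support_sum_monomial_coeff, map_sum]
  apply Submodule.sum_mem
  intro d hd
  have hdeg : Finsupp.degree d = 1 := by
    rw [Finsupp.degree_eq_weight_one]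
    exact h (mem_support_iff.mp hd)
  obtain ⟨i, rfl⟩ := exists_single_of_degree_one d hdeg
  rw [rename_monomial, Finsupp.mapDomain_single]
  have hX : (X i.succ : MvPolynomial (Fin (n + 1)) K)
      = monomial (Finsupp.single i.succ 1) (1 : K) := rfl
  have : (monomial (Finsupp.single i.succ 1) (coeff (Finsupp.single i 1) s) :
      MvPolynomial (Fin (n + 1)) K) = coeff (Finsupp.single i 1) s • X i.succ := by
    rw [hX, smul_monomial, smul_eq_mul, mul_one]
  rw [this]
  exact Submodule.smul_mem _ _ (Submodule.subset_span ⟨i, rfl⟩)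

end Aux

/-- Partial elimination ideals commute with graded linear changes of coordinates fixing the
filtration: if `ψ` is a graded automorphism of `R = K[x₀,…,xₙ]` with `ψ(x₀) = x₀ + ℓ` for a
linear form `ℓ ∈ S = K[x₁,…,xₙ]` and `ψ(S) ⊆ S`, then `K_k(ψ(I)) = ψ|_S(K_k(I))`. -/
theorem pelim_comm_coord_change {K : Type*} [Field K] {n : ℕ}
    (ψ : MvPolynomial (Fin (n + 1)) K ≃ₐ[K] MvPolynomial (Fin (n + 1)) K)
    (hgr : ∀ (p : MvPolynomial (Fin (n + 1)) K) (d : ℕ), p.IsHomogeneous d →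
      (ψ p).IsHomogeneous d)
    (ℓ : MvPolynomial (Fin n) K) (hℓ : ℓ.IsHomogeneous 1)
    (hx0 : ψ (X 0) = X 0 + rename Fin.succ ℓ)
    (hS : ∀ s : MvPolynomial (Fin n) K, ∃ s' : MvPolynomial (Fin n) K,
      ψ (rename Fin.succ s) = rename Fin.succ s')
    (I : Ideal (MvPolynomial (Fin (n + 1)) K)) (k : ℕ) :
    pelimMv (I.map (ψ : MvPolynomial (Fin (n + 1)) K →+* MvPolynomial (Fin (n + 1)) K)) k =
      {t : MvPolynomial (Fin n) K | ∃ s ∈ pelimMv I k,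
        ψ (rename Fin.succ s) = rename Fin.succ t} := by
  classical
  set W : Submodule K (MvPolynomial (Fin (n + 1)) K) :=
    Submodule.span K (Set.range fun i : Fin n => (X i.succ : MvPolynomial (Fin (n + 1)) K))
    with hWdef
  -- ψ maps W into W
  have hW : ∀ x ∈ W, ψ x ∈ W := by
    intro x hx
    have hle : W.map ψ.toLinearMap ≤ W := by
      rw [hWdef, Submodule.map_span, Submodule.span_le]
      rintro _ ⟨_, ⟨i, rfl⟩, rfl⟩
      obtain ⟨s', hs'⟩ := hS (X i)
      rw [rename_X] at hs'
      show (ψ (X i.succ) : MvPolynomial (Fin (n + 1)) K) ∈ W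
      rw [hs']
      apply homog1_mem
      have h2 : (ψ (X i.succ)).IsHomogeneous 1 := hgr _ 1 (isHomogeneous_X _ _)
      rw [hs'] at h2
      exact (IsHomogeneous.rename_isHomogeneous_iff (Fin.succ_injective n)).mp h2
    exact hle ⟨x, hx, rfl⟩
  haveI : FiniteDimensional K W := FiniteDimensional.span_of_finite K (Set.finite_range _)
  -- restricted linear map is injective hence surjective
  have hsurj : ∀ i : Fin n, ∃ w, w ∈ W ∧ ψ w = X i.succ := by
    set f : W →ₗ[K] W := ψ.toLinearMap.restrict hW with hf
    have hinj : Function.Injective f := by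
      intro a b hab
      apply Subtype.ext
      apply ψ.injective
      exact congrArg Subtype.val hab
    have hsur : Function.Surjective f := LinearMap.injective_iff_surjective.mp hinj
    intro i
    have hXmem : (X i.succ : MvPolynomial (Fin (n + 1)) K) ∈ W :=
      Submodule.subset_span ⟨i, rfl⟩
    obtain ⟨⟨w, hw⟩, hfw⟩ := hsur ⟨X i.succ, hXmem⟩
    refine ⟨w, hw, ?_⟩
    exact congrArg Subtype.val hfw
  -- range of rename as subalgebra
  have hTW : ∀ w ∈ W, w ∈ (rename (R := K) (Fin.succ (n := n))).range := by
    intro w hw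
    rw [hWdef] at hw
    have : Submodule.span K (Set.range fun i : Fin n =>
        (X i.succ : MvPolynomial (Fin (n + 1)) K)) ≤
        Subalgebra.toSubmodule (rename (R := K) (Fin.succ (n := n))).range := by
      rw [Submodule.span_le]
      rintro _ ⟨i, rfl⟩
      exact ⟨X i, rename_X _ _⟩
    exact this hw
  have hrangeAdj : (rename (R := K) (Fin.succ (n := n))).range =
      Algebra.adjoin K (Set.range fun i : Fin n =>
        (X i.succ : MvPolynomial (Fin (n + 1)) K)) := by
    have h1 := AlgHom.map_adjoin (rename (R := K) (Fin.succ (n := n)))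
      (Set.range (X : Fin n → MvPolynomial (Fin n) K))
    rw [adjoin_range_X, Algebra.map_top, ← Set.range_comp] at h1
    have h2 : (⇑(rename (R := K) (Fin.succ (n := n))) ∘ (X : Fin n → MvPolynomial (Fin n) K))
        = fun i : Fin n => (X i.succ : MvPolynomial (Fin (n + 1)) K) :=
      funext fun i => rename_X _ _
    rw [h1, h2]
  -- ψ⁻¹ stabilizes the subring S
  have hrange : ∀ s : MvPolynomial (Fin n) K, ∃ s' : MvPolynomial (Fin n) K,
      ψ.symm (rename Fin.succ s) = rename Fin.succ s' := by
    intro s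
    have hmem : rename Fin.succ s ∈ Algebra.adjoin K (Set.range fun i : Fin n =>
        (X i.succ : MvPolynomial (Fin (n + 1)) K)) := by
      rw [← hrangeAdj]; exact ⟨s, rfl⟩
    have hmap : ψ.symm (rename Fin.succ s) ∈
        (Algebra.adjoin K (Set.range fun i : Fin n =>
          (X i.succ : MvPolynomial (Fin (n + 1)) K))).map ψ.symm.toAlgHom :=
      ⟨_, hmem, rfl⟩
    rw [AlgHom.map_adjoin] at hmap
    have hle : Algebra.adjoin K (ψ.symm.toAlgHom '' (Set.range fun i : Fin n =>
        (X i.succ : MvPolynomial (Fin (n + 1)) K))) ≤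
        (rename (R := K) (Fin.succ (n := n))).range := by
      apply Algebra.adjoin_le
      rintro _ ⟨_, ⟨i, rfl⟩, rfl⟩
      obtain ⟨w, hwW, hw⟩ := hsurj i
      have : ψ.symm.toAlgHom (X i.succ) = w := by
        show ψ.symm (X i.succ) = w
        rw [← hw, AlgEquiv.symm_apply_apply]
      rw [this]
      exact hTW w hwW
    obtain ⟨s', hs'⟩ := hle hmap
    exact ⟨s', hs'.symm⟩
  obtain ⟨m, hm⟩ := hrange ℓ
  have hψρm : ψ (rename Fin.succ m) = rename Fin.succ ℓ := by
    rw [← hm, AlgEquiv.apply_symm_apply]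
  have hx0' : ψ.symm (X 0) = X 0 + rename Fin.succ (-m) := by
    apply ψ.injective
    rw [AlgEquiv.apply_symm_apply, map_add, hx0, map_neg, map_neg, hψρm]
    ring
  ext t
  simp only [Set.mem_setOf_eq]
  constructor
  · intro ht
    obtain ⟨s, hst⟩ := hrange t
    have hmem := lemA ψ.symm (-m) hx0' hrange
      (I.map (ψ : MvPolynomial (Fin (n + 1)) K →+* MvPolynomial (Fin (n + 1)) K)) k hst ht
    have hII : (I.map (ψ : MvPolynomial (Fin (n + 1)) K →+* MvPolynomial (Fin (n + 1)) K)).map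
        (ψ.symm : MvPolynomial (Fin (n + 1)) K →+* MvPolynomial (Fin (n + 1)) K) = I := by
      rw [Ideal.map_map]
      have hid : (ψ.symm : MvPolynomial (Fin (n + 1)) K →+* MvPolynomial (Fin (n + 1)) K).comp
          (ψ : MvPolynomial (Fin (n + 1)) K →+* MvPolynomial (Fin (n + 1)) K) = RingHom.id _ := by
        exact RingHom.ext fun x => ψ.symm_apply_apply x
      rw [hid, Ideal.map_id]
    rw [hII] at hmem
    refine ⟨s, hmem, ?_⟩
    rw [← hst, AlgEquiv.apply_symm_apply]
  · rintro ⟨s, hs, hst⟩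
    exact lemA ψ ℓ hx0 hS I k hst hs
end

section
/- Let K be an algebraically closed field, k ∈ ℕ, and λ = (λ₁,…,λ_e) a partition of k. The set X_λ = { (a₀:…:a_k) ∈ ℙ^k(K) | Σ_{j=0}^k a_j x^{k-j} y^j = ∏_{i=1}^e L_i^{λ_i} for some linear forms L_i ∈ K[x,y]₁ } is a Zariski-closed subset of ℙ^k(K). -/
/-!
A binary form with nonzero `x^k`-coefficient `b₀` lies in the cone exactly when `b / b₀` is the
coefficient vector of some `∏ (X - tᵢ)^λᵢ`, i.e. lies in the image of the polynomial map
`t ↦ coefficients of ∏ (X - tᵢ)^λᵢ`. The corresponding algebra map `K[a₀,…,a_k] → K[t₁,…,t_e]`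
is integral (each `tᵢ` is a root of the monic universal product), so by lying-over and the
Nullstellensatz its image is the zero set of its kernel. Homogenizing the kernel in `a₀` gives
homogeneous equations for the part of the cone with `a₀ ≠ 0`, and a shear `y ↦ s x + y`, which
preserves the cone, moves any nonzero form into that part.
-/

open MvPolynomial

/-- The binary form `Σ_{j=0}^k a_j x^{k-j} y^j` associated to a coefficient vector `a`. -/
noncomputable def binForm {K : Type*} [Field K] (k : ℕ) (a : Fin (k + 1) → K) :
    MvPolynomial (Fin 2) K :=
  ∑ j : Fin (k + 1), C (a j) * X 0 ^ (k - (j : ℕ)) * X 1 ^ (j : ℕ)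

/-- The affine cone over the coincident root locus `X_λ ⊆ ℙ^k`: coefficient vectors `a`
such that `Σ a_j x^{k-j} y^j = ∏ L_i^{λ_i}` for some (not necessarily distinct) linear
forms `L_i ∈ K[x,y]₁`. -/
def crCone {K : Type*} [Field K] (k : ℕ) {e : ℕ} (lam : Fin e → ℕ) :
    Set (Fin (k + 1) → K) :=
  {a | ∃ L : Fin e → MvPolynomial (Fin 2) K, (∀ i, (L i).IsHomogeneous 1) ∧
    binForm k a = ∏ i, L i ^ lam i}

open scoped Matrix

namespace MvPolynomial

section CommSemiring

variable {σ τ R : Type*} [CommSemiring R]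

theorem eval_aeval (c : σ → R) (g : τ → MvPolynomial σ R) (F : MvPolynomial τ R) :
    eval c (aeval g F) = eval (fun i => eval c (g i)) F :=
  comp_aeval_apply (f := g) (aeval c) F

theorem eval_aeval_toMvPolynomial [Fintype σ] (M : Matrix τ σ R) (F : MvPolynomial τ R)
    (c : σ → R) : eval c (aeval M.toMvPolynomial F) = eval (M *ᵥ c) F := by
  simp only [eval_aeval, Matrix.toMvPolynomial_eval_eq_apply]

theorem IsHomogeneous.eval_smul [Fintype σ] {φ : MvPolynomial σ R} {n : ℕ}
    (hφ : φ.IsHomogeneous n) (c : R) (x : σ → R) :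
    eval (c • x) φ = c ^ n * eval x φ := by
  rw [eval_eq', eval_eq', Finset.mul_sum]
  refine Finset.sum_congr rfl fun d hd => ?_
  have hdeg : ∑ i, d i = n := by
    rw [← hφ (mem_support_iff.mp hd), Finsupp.weight_apply, Finsupp.sum_fintype _ _ (by simp)]
    simp
  simp only [Pi.smul_apply, smul_eq_mul, mul_pow, Finset.prod_mul_distrib,
    Finset.prod_pow_eq_pow_sum, hdeg]
  ring

noncomputable def homogenization (i : σ) (p : MvPolynomial σ R) : MvPolynomial σ R :=
  ∑ n ∈ Finset.range (p.totalDegree + 1), X i ^ (p.totalDegree - n) * homogeneousComponent n p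

theorem isHomogeneous_homogenization (i : σ) (p : MvPolynomial σ R) :
    (homogenization i p).IsHomogeneous p.totalDegree := by
  refine IsHomogeneous.sum _ _ _ fun n hn => ?_
  convert ((isHomogeneous_X R i).pow _).mul (homogeneousComponent_isHomogeneous n p) using 1
  have := Finset.mem_range_succ_iff.mp hn
  omega

theorem eval_smul_homogenization [Fintype σ] {i : σ} {u : σ → R} (hu : u i = 1) (c : R)
    (p : MvPolynomial σ R) :
    eval (c • u) (homogenization i p) = c ^ p.totalDegree * eval u p := by
  have hp : eval u p =
      ∑ n ∈ Finset.range (p.totalDegree + 1), eval u (homogeneousComponent n p) := by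
    rw [← map_sum, sum_homogeneousComponent]
  rw [hp, Finset.mul_sum]
  simp only [homogenization, map_sum, map_mul, map_pow, eval_X, Pi.smul_apply, hu, smul_eq_mul,
    mul_one, (homogeneousComponent_isHomogeneous _ p).eval_smul]
  refine Finset.sum_congr rfl fun n hn => ?_
  rw [← mul_assoc, ← pow_add, Nat.sub_add_cancel (Finset.mem_range_succ_iff.mp hn)]

end CommSemiring

theorem isIntegral_of_isIntegralElem_X {σ τ R : Type*} [CommRing R]
    (ψ : MvPolynomial σ R →ₐ[R] MvPolynomial τ R)
    (hX : ∀ i, ψ.toRingHom.IsIntegralElem (X i)) : ψ.toRingHom.IsIntegral := by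
  intro x
  induction x using MvPolynomial.induction_on with
  | C c => simpa using ψ.toRingHom.isIntegralElem_map (x := C c)
  | add p q hp hq => exact RingHom.IsIntegralElem.add _ hp hq
  | mul_X p i hp => exact RingHom.IsIntegralElem.mul _ hp (hX i)

section Field

variable {σ τ K : Type*} [Field K]

/-- Lying-over for `ψ` combined with the Nullstellensatz on the target. -/
theorem exists_eval_comp_eq_of_isIntegral [IsAlgClosed K] [Finite τ]
    (ψ : MvPolynomial σ K →ₐ[K] MvPolynomial τ K) (hψ : ψ.toRingHom.IsIntegral)
    (v : σ → K) (hv : ∀ p, ψ p = 0 → eval v p = 0) :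
    ∃ t : τ → K, ∀ p, eval t (ψ p) = eval v p := by
  let : Algebra (MvPolynomial σ K) (MvPolynomial τ K) := ψ.toRingHom.toAlgebra
  have : Algebra.IsIntegral (MvPolynomial σ K) (MvPolynomial τ K) := ⟨hψ⟩
  have : (RingHom.ker (eval v)).IsMaximal :=
    RingHom.ker_isMaximal_of_surjective _ fun c => ⟨C c, eval_C c⟩
  obtain ⟨m, hm, hcomap⟩ :=
    Ideal.exists_ideal_over_maximal_of_isIntegral (RingHom.ker (eval v)) fun p hp => hv p hp
  obtain ⟨t, rfl⟩ := isMaximal_iff_eq_vanishingIdeal_singleton.mp hm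
  refine ⟨t, fun p => ?_⟩
  have hp : p - C (eval v p) ∈ RingHom.ker (eval v) := by simp
  rw [← hcomap, Ideal.mem_comap, mem_vanishingIdeal_singleton_iff] at hp
  change eval t (ψ (p - C (eval v p))) = 0 at hp
  rwa [map_sub, ← algebraMap_eq, ψ.commutes, algebraMap_eq, map_sub, eval_C, sub_eq_zero] at hp

def homogeneousVanishing (S : Set (σ → K)) : Set (MvPolynomial σ K) :=
  {F | (∃ d, F.IsHomogeneous d) ∧ ∀ c ∈ S, eval c F = 0}

/-- The affine cone over the projective Zariski closure of `S`. -/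
def homogeneousClosure (S : Set (σ → K)) : Set (σ → K) :=
  {a | ∀ F ∈ homogeneousVanishing S, eval a F = 0}

theorem _root_.Set.MapsTo.homogeneousClosure [Fintype σ] {S : Set (σ → K)}
    {g : (σ → K) →ₗ[K] σ → K} (hg : Set.MapsTo g S S) :
    Set.MapsTo g (homogeneousClosure S) (homogeneousClosure S) := by
  classical
  intro a ha F ⟨⟨d, hF⟩, hFS⟩
  have hpull : aeval (LinearMap.toMatrix' g).toMvPolynomial F ∈ homogeneousVanishing S := by
    refine ⟨⟨1 * d, hF.aeval _ (Matrix.toMvPolynomial_isHomogeneous _)⟩, fun c hc => ?_⟩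
    rw [eval_aeval_toMvPolynomial, LinearMap.toMatrix'_mulVec]
    exact hFS _ (hg hc)
  have := ha _ hpull
  rwa [eval_aeval_toMvPolynomial, LinearMap.toMatrix'_mulVec] at this

end Field

end MvPolynomial

namespace Polynomial

variable {R : Type*}

noncomputable def coeffVec [CommSemiring R] (k : ℕ) : R[X] →ₗ[R] Fin (k + 1) → R :=
  LinearMap.pi fun j => lcoeff R (k - j)

@[simp]
theorem coeffVec_apply [CommSemiring R] (k : ℕ) (Q : R[X]) (j : Fin (k + 1)) :
    coeffVec k Q j = Q.coeff (k - j) := rfl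

variable [CommRing R] {ι : Type*} (s : Finset ι) (t : ι → R) (n : ι → ℕ)

theorem monic_prod_X_sub_C_pow : (∏ i ∈ s, (X - C (t i)) ^ n i).Monic :=
  monic_prod_of_monic _ _ fun _ _ => (monic_X_sub_C _).pow _

theorem natDegree_prod_X_sub_C_pow [Nontrivial R] :
    (∏ i ∈ s, (X - C (t i)) ^ n i).natDegree = ∑ i ∈ s, n i := by
  rw [natDegree_prod_of_monic _ _ fun _ _ => (monic_X_sub_C _).pow _]
  simp [(monic_X_sub_C _).natDegree_pow]

theorem coeffVec_prod_X_sub_C_pow_zero [Nontrivial R] :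
    coeffVec (∑ i ∈ s, n i) (∏ i ∈ s, (X - C (t i)) ^ n i) 0 = 1 := by
  simpa [natDegree_prod_X_sub_C_pow] using (monic_prod_X_sub_C_pow s t n).coeff_natDegree

end Polynomial

section BinaryForms

variable {K : Type*} [Field K]

open Polynomial in
theorem binForm_coeffVec (k : ℕ) (Q : K[X]) : binForm k (coeffVec k Q) = Q.homogenize k := by
  have hmon : ∀ m n : ℕ, ∀ c : K,
      (MvPolynomial.monomial (fun₀ | 0 => m | 1 => n) c : MvPolynomial (Fin 2) K) =
      MvPolynomial.C c * MvPolynomial.X 0 ^ m * MvPolynomial.X 1 ^ n := by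
    intro m n c
    rw [MvPolynomial.C_mul_X_pow_eq_monomial, MvPolynomial.X_pow_eq_monomial,
      MvPolynomial.monomial_mul, mul_one, Finsupp.update_eq_add_single (by simp)]
  rw [homogenize, ← Finset.Nat.sum_antidiagonal_swap]
  simp_rw [Prod.fst_swap, Prod.snd_swap, hmon]
  rw [Finset.Nat.sum_antidiagonal_eq_sum_range_succ (fun j i => MvPolynomial.C (Q.coeff i) *
      MvPolynomial.X 0 ^ i * MvPolynomial.X 1 ^ j), ← Fin.sum_univ_eq_sum_range]
  rfl

theorem coeffVec_aeval_binForm (k : ℕ) (a : Fin (k + 1) → K) :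
    Polynomial.coeffVec k (aeval ![Polynomial.X, 1] (binForm k a)) = a := by
  ext j
  simp only [binForm, map_sum, map_mul, map_pow, aeval_C, aeval_X, Polynomial.coeffVec_apply,
    Polynomial.finsetSum_coeff, Polynomial.algebraMap_eq]
  rw [Finset.sum_eq_single j]
  · simp
  · intro i _ hij
    simp only [Matrix.cons_val_zero, Matrix.cons_val_one, one_pow, mul_one,
      Polynomial.coeff_C_mul_X_pow]
    rw [if_neg]
    omega
  · simp

theorem binForm_injective (k : ℕ) : Function.Injective (binForm (K := K) k) := fun a b h => by
  rw [← coeffVec_aeval_binForm k a, h, coeffVec_aeval_binForm]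

theorem isHomogeneous_binForm (k : ℕ) (a : Fin (k + 1) → K) :
    (binForm k a).IsHomogeneous k := by
  rw [← coeffVec_aeval_binForm k a, binForm_coeffVec]
  exact Polynomial.isHomogeneous_homogenize _

theorem MvPolynomial.IsHomogeneous.eq_binForm {k : ℕ} {g : MvPolynomial (Fin 2) K}
    (hg : g.IsHomogeneous k) :
    g = binForm k (Polynomial.coeffVec k (MvPolynomial.aeval ![Polynomial.X, 1] g)) := by
  rw [binForm_coeffVec, Polynomial.homogenize_eq_of_isHomogeneous hg rfl]

theorem eval_binForm_one_zero (k : ℕ) (a : Fin (k + 1) → K) :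
    eval ![1, 0] (binForm k a) = a 0 := by
  rw [binForm, map_sum, Finset.sum_eq_single 0]
  · simp
  · intro j _ hj
    simp [Fin.val_ne_zero_iff.mpr hj]
  · simp

theorem MvPolynomial.IsHomogeneous.eq_C_mul_X_add_C_mul_X {L : MvPolynomial (Fin 2) K}
    (hL : L.IsHomogeneous 1) : L = C (eval ![1, 0] L) * X 0 + C (eval ![0, 1] L) * X 1 := by
  obtain ⟨c, rfl⟩ : ∃ c, L = binForm 1 c := ⟨_, hL.eq_binForm⟩
  simp [binForm, Fin.sum_univ_two]

theorem homogenize_prod_X_sub_C_pow {e : ℕ} (lam : Fin e → ℕ) (t : Fin e → K) :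
    (∏ i, (Polynomial.X - Polynomial.C (t i)) ^ lam i).homogenize (∑ i, lam i) =
      ∏ i, (X 0 - C (t i) * X 1) ^ lam i := by
  refine Polynomial.homogenize_eq_of_isHomogeneous
    (IsHomogeneous.prod _ _ _ fun i _ => ?_) (by simp)
  simpa using ((isHomogeneous_X K 0).sub (isHomogeneous_C_mul_X (t i) 1)).pow (lam i)

noncomputable def binFormₗ (k : ℕ) : (Fin (k + 1) → K) →ₗ[K] MvPolynomial (Fin 2) K where
  toFun := binForm k
  map_add' a b := by simp only [binForm, Pi.add_apply, map_add, add_mul, Finset.sum_add_distrib]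
  map_smul' c a := by
    simp only [binForm, Pi.smul_apply, smul_eq_mul, map_mul, Finset.smul_sum, smul_eq_C_mul,
      RingHom.id_apply, mul_assoc]

theorem binForm_smul (k : ℕ) (c : K) (a : Fin (k + 1) → K) :
    binForm k (c • a) = C c * binForm k a := by
  rw [← smul_eq_C_mul]
  exact (binFormₗ k).map_smul c a

theorem exists_eval_binForm_ne_zero [Infinite K] {k : ℕ} {a : Fin (k + 1) → K} (ha : a ≠ 0) :
    ∃ s, eval ![1, s] (binForm k a) ≠ 0 := by
  classical
  by_contra! h
  refine ha (Polynomial.injective_ofFn (k + 1) ?_)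
  rw [map_zero]
  refine Polynomial.funext fun s => ?_
  rw [Polynomial.eval_zero, ← h s]
  simp [binForm, Polynomial.ofFn_eq_sum_monomial, Polynomial.eval_finsetSum]

end BinaryForms

section Shear

variable {K : Type*} [Field K]

noncomputable def shearSubst (s : K) : Fin 2 → MvPolynomial (Fin 2) K := ![X 0, C s * X 0 + X 1]

theorem isHomogeneous_shearSubst (s : K) (i : Fin 2) : (shearSubst s i).IsHomogeneous 1 := by
  fin_cases i
  · exact isHomogeneous_X K 0
  · exact (isHomogeneous_C_mul_X s 0).add (isHomogeneous_X K 1)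

/-- The action of `y ↦ s x + y` on coefficient vectors. -/
noncomputable def shear (k : ℕ) (s : K) : (Fin (k + 1) → K) →ₗ[K] Fin (k + 1) → K :=
  Polynomial.coeffVec k ∘ₗ (aeval ![Polynomial.X, 1]).toLinearMap ∘ₗ
    (aeval (shearSubst s)).toLinearMap ∘ₗ binFormₗ k

theorem binForm_shear (k : ℕ) (s : K) (a : Fin (k + 1) → K) :
    binForm k (shear k s a) = aeval (shearSubst s) (binForm k a) := by
  have := (isHomogeneous_binForm k a).aeval _ (isHomogeneous_shearSubst s)
  rw [one_mul] at this
  exact this.eq_binForm.symm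

theorem shear_neg_shear (k : ℕ) (s : K) (a : Fin (k + 1) → K) :
    shear k (-s) (shear k s a) = a := by
  refine binForm_injective k ?_
  have hsubst : (fun i => aeval (shearSubst (-s)) (shearSubst s i)) = X := by
    ext i : 1
    fin_cases i <;> simp [shearSubst]
  rw [binForm_shear, binForm_shear, comp_aeval_apply, hsubst, aeval_X_left_apply]

theorem shear_apply_zero (k : ℕ) (s : K) (a : Fin (k + 1) → K) :
    shear k s a 0 = eval ![1, s] (binForm k a) := by
  rw [← eval_binForm_one_zero k (shear k s a), binForm_shear, eval_aeval]
  congr 2 with i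
  fin_cases i <;> simp [shearSubst]

theorem mapsTo_shear_crCone {k e : ℕ} (lam : Fin e → ℕ) (s : K) :
    Set.MapsTo (shear k s) (crCone k lam) (crCone k lam) := by
  rintro a ⟨L, hL, hprod⟩
  refine ⟨fun i => aeval (shearSubst s) (L i), fun i => ?_, ?_⟩
  · simpa using (hL i).aeval _ (isHomogeneous_shearSubst s)
  · simp [binForm_shear, hprod]

end Shear

section CoincidentRootLocus

variable {K : Type*} [Field K] {k e : ℕ} {lam : Fin e → ℕ}

theorem smul_coeffVec_mem_crCone [IsAlgClosed K] (hk : 0 < k) (hsum : ∑ i, lam i = k) (c : K)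
    (t : Fin e → K) :
    c • Polynomial.coeffVec k (∏ i, (Polynomial.X - Polynomial.C (t i)) ^ lam i) ∈
      crCone k lam := by
  subst hsum
  obtain ⟨γ, hγ⟩ := IsAlgClosed.exists_pow_nat_eq c hk
  refine ⟨fun i => C γ * (X 0 - C (t i) * X 1), fun i => ?_, ?_⟩
  · exact ((isHomogeneous_X K 0).sub (isHomogeneous_C_mul_X (t i) 1)).C_mul γ
  · rw [binForm_smul, binForm_coeffVec, homogenize_prod_X_sub_C_pow]
    simp_rw [mul_pow, Finset.prod_mul_distrib, ← map_pow, ← map_prod,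
      Finset.prod_pow_eq_pow_sum, hγ]

theorem exists_eq_smul_coeffVec_of_mem_crCone (hpos : ∀ i, 0 < lam i) (hsum : ∑ i, lam i = k)
    {b : Fin (k + 1) → K} (hb : b ∈ crCone k lam) (hb0 : b 0 ≠ 0) :
    ∃ t : Fin e → K,
      b = b 0 • Polynomial.coeffVec k (∏ i, (Polynomial.X - Polynomial.C (t i)) ^ lam i) := by
  obtain ⟨L, hL, hprod⟩ := hb
  set α := fun i => eval ![1, 0] (L i)
  have hb0_eq : b 0 = ∏ i, α i ^ lam i := by
    rw [← eval_binForm_one_zero k b, hprod, map_prod]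
    simp [α]
  have hα : ∀ i, α i ≠ 0 := fun i hi =>
    hb0 (hb0_eq ▸ Finset.prod_eq_zero (Finset.mem_univ i) (by simp [hi, (hpos i).ne']))
  refine ⟨fun i => -eval ![0, 1] (L i) / α i, binForm_injective k ?_⟩
  subst hsum
  rw [binForm_smul, binForm_coeffVec, homogenize_prod_X_sub_C_pow, hprod, hb0_eq, map_prod,
    ← Finset.prod_mul_distrib]
  refine Finset.prod_congr rfl fun i _ => ?_
  rw [map_pow, ← mul_pow]
  congr 1
  conv_lhs => rw [(hL i).eq_C_mul_X_add_C_mul_X]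
  rw [mul_sub, ← mul_assoc, ← C_mul, mul_div_cancel₀ _ (hα i), map_neg, neg_mul,
    sub_neg_eq_add]

variable (K) in
/-- Sends `a_j` to the coefficient of `x^{k-j}` in `∏ (x - tᵢ)^λᵢ` for indeterminates `tᵢ`. -/
noncomputable def rootCoeffMap (k : ℕ) (lam : Fin e → ℕ) :
    MvPolynomial (Fin (k + 1)) K →ₐ[K] MvPolynomial (Fin e) K :=
  aeval (Polynomial.coeffVec k (∏ i, (Polynomial.X - Polynomial.C (X i)) ^ lam i))

theorem eval_rootCoeffMap (t : Fin e → K) (p : MvPolynomial (Fin (k + 1)) K) :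
    eval t (rootCoeffMap K k lam p) =
      eval (Polynomial.coeffVec k (∏ i, (Polynomial.X - Polynomial.C (t i)) ^ lam i)) p := by
  rw [rootCoeffMap, eval_aeval]
  congr 2 with j
  simp [← Polynomial.coeff_map, Polynomial.map_prod]

theorem isIntegral_rootCoeffMap (hpos : ∀ i, 0 < lam i) (hsum : ∑ i, lam i = k) :
    (rootCoeffMap K k lam).toRingHom.IsIntegral := by
  set P := ∏ i, (Polynomial.X - Polynomial.C (X i : MvPolynomial (Fin e) K)) ^ lam i
  have hdeg : P.natDegree = k := by
    rw [Polynomial.natDegree_prod_X_sub_C_pow, hsum]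
  have hlifts : P ∈ Polynomial.lifts (rootCoeffMap K k lam).toRingHom := by
    refine (Polynomial.lifts_iff_coeff_lifts P).mpr fun n => ?_
    rcases le_or_gt n k with hn | hn
    · refine ⟨X ⟨k - n, by omega⟩, ?_⟩
      simp [rootCoeffMap, P, Nat.sub_sub_self hn]
    · exact ⟨0, by simp [Polynomial.coeff_eq_zero_of_natDegree_lt (hdeg ▸ hn)]⟩
  obtain ⟨q, hq, -, hqmonic⟩ :=
    Polynomial.lifts_and_natDegree_eq_and_monic hlifts (Polynomial.monic_prod_X_sub_C_pow _ _ _)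
  refine isIntegral_of_isIntegralElem_X _ fun i => ⟨q, hqmonic, ?_⟩
  rw [← Polynomial.eval_map, hq, Polynomial.eval_prod]
  exact Finset.prod_eq_zero (Finset.mem_univ i) (by simp [(hpos i).ne'])

/-- The factor `X 0` makes the equation vanish also on the part of the cone where `a₀ = 0`. -/
theorem X_mul_homogenization_mem_homogeneousVanishing (hpos : ∀ i, 0 < lam i)
    (hsum : ∑ i, lam i = k) {p : MvPolynomial (Fin (k + 1)) K} (hp : rootCoeffMap K k lam p = 0) :
    X 0 * homogenization 0 p ∈ homogeneousVanishing (crCone k lam) := by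
  refine ⟨⟨_, (isHomogeneous_X K 0).mul (isHomogeneous_homogenization 0 p)⟩, fun c hc => ?_⟩
  rcases eq_or_ne (c 0) 0 with hc0 | hc0
  · simp [hc0]
  obtain ⟨t, ht⟩ := exists_eq_smul_coeffVec_of_mem_crCone hpos hsum hc hc0
  have ht0 := Polynomial.coeffVec_prod_X_sub_C_pow_zero Finset.univ t lam
  rw [hsum] at ht0
  rw [map_mul, ht, eval_smul_homogenization ht0, ← eval_rootCoeffMap, hp]
  simp

theorem mem_crCone_of_mem_homogeneousClosure [IsAlgClosed K] (hk : 0 < k)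
    (hpos : ∀ i, 0 < lam i) (hsum : ∑ i, lam i = k) {b : Fin (k + 1) → K}
    (hb : b ∈ homogeneousClosure (crCone k lam)) (hb0 : b 0 ≠ 0) : b ∈ crCone k lam := by
  have hu0 : ((b 0)⁻¹ • b) 0 = 1 := by simp [hb0]
  have hkernel : ∀ p, rootCoeffMap K k lam p = 0 → eval ((b 0)⁻¹ • b) p = 0 := by
    intro p hp
    have := hb _ (X_mul_homogenization_mem_homogeneousVanishing hpos hsum hp)
    rw [← smul_inv_smul₀ hb0 b, map_mul, eval_smul_homogenization hu0] at this
    simpa [hb0] using this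
  obtain ⟨t, ht⟩ :=
    exists_eval_comp_eq_of_isIntegral _ (isIntegral_rootCoeffMap hpos hsum) _ hkernel
  have hcoeff : (b 0)⁻¹ • b =
      Polynomial.coeffVec k (∏ i, (Polynomial.X - Polynomial.C (t i)) ^ lam i) :=
    funext fun j => by simpa [eval_rootCoeffMap] using (ht (X j)).symm
  rw [← smul_inv_smul₀ hb0 b, hcoeff]
  exact smul_coeffVec_mem_crCone hk hsum _ t

theorem homogeneousClosure_crCone_subset [IsAlgClosed K] (hk : 0 < k) (hpos : ∀ i, 0 < lam i)
    (hsum : ∑ i, lam i = k) : homogeneousClosure (crCone k lam) ⊆ crCone (K := K) k lam := by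
  intro a ha
  rcases eq_or_ne a 0 with rfl | ha0
  · simpa using smul_coeffVec_mem_crCone hk hsum (0 : K) 0
  obtain ⟨s, hs⟩ := exists_eval_binForm_ne_zero ha0
  have hsa : shear k s a ∈ crCone k lam :=
    mem_crCone_of_mem_homogeneousClosure hk hpos hsum
      ((mapsTo_shear_crCone lam s).homogeneousClosure ha) (by rwa [shear_apply_zero])
  simpa [shear_neg_shear] using mapsTo_shear_crCone lam (-s) hsa

end CoincidentRootLocus

/-- The coincident root locus `X_λ` of a partition `λ` of `k > 0` is Zariski-closed in
`ℙ^k(K)`: its affine cone is the common zero locus of a set of homogeneous polynomials in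
the coefficients `a₀,…,a_k`. -/
theorem coincident_root_locus_closed {K : Type*} [Field K] [IsAlgClosed K]
    (k e : ℕ) (hk : 0 < k) (lam : Fin e → ℕ)
    (hpos : ∀ i, 0 < lam i) (hsum : ∑ i, lam i = k) :
    ∃ T : Set (MvPolynomial (Fin (k + 1)) K),
      (∀ F ∈ T, ∃ d : ℕ, F.IsHomogeneous d) ∧
      crCone k lam = {a | ∀ F ∈ T, eval a F = 0} :=
  ⟨homogeneousVanishing (crCone k lam), fun _ hF => hF.1,
    (homogeneousClosure_crCone_subset hk hpos hsum).antisymm' fun _ ha _ hF => hF.2 _ ha⟩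
end
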